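/- arXiv:2004.11719 — 2 statements merged into one kernel-verified Lean document; each statement's English description precedes it below -/
import Mathlib

section
/- Let k ∈ ℕ and let σ be a function assigning to each n ∈ ℕ a set σ(n) of functions from I_n to {0,1} with |σ(n)| ≤ 2^{kn}. Then the set B = {x ∈ 2^ω : for all n, h_x(n) ∈ σ(n)} is closed and nowhere dense in 2^ω. -/
/-- The interval `I_n = [2^n − 1, 2^{n+1} − 1)` of the partition of `ℕ` has exactly
`2^n` elements; we identify the restriction `h_x(n) = x↾I_n` of `x ∈ 2^ω` to `I_n`
with the function `Fin (2^n) → Bool`, `i ↦ x (2^n − 1 + i)`. -/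
def hRes (x : ℕ → Bool) (n : ℕ) : Fin (2 ^ n) → Bool :=
  fun i => x (2 ^ n - 1 + (i : ℕ))

/-- The slalom set `B = {x ∈ 2^ω : ∀ n, h_x(n) ∈ σ(n)}`. -/
def slalomSet (σ : (n : ℕ) → Finset (Fin (2 ^ n) → Bool)) : Set (ℕ → Bool) :=
  { x | ∀ n : ℕ, hRes x n ∈ σ n }

/-!
`B` is an intersection of preimages of finite sets under the continuous maps `h_·(n)`, hence
closed. A basic open set fixes only an initial segment of `x`, and past it lies a block `I_n`
with `|σ(n)| ≤ 2^{kn} < 2^{2^n}`; filling that block with a pattern outside `σ(n)` gives a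
point of the basic open set outside `B`, so `B` has empty interior.
-/

open Filter PiNat

theorem Nat.eventually_mul_lt_two_pow (k : ℕ) : ∀ᶠ n : ℕ in atTop, k * n < 2 ^ n := by
  have hlim := tendsto_pow_const_div_const_pow_of_one_lt 1 (one_lt_two (α := ℝ))
  filter_upwards [hlim.eventually_lt_const (inv_pos.2 (k.cast_add_one_pos (α := ℝ)))] with n hn
  have hlt : ((k + 1) * n : ℝ) < 2 ^ n := by
    rw [pow_one, div_lt_iff₀ (by positivity)] at hn
    exact (lt_inv_mul_iff₀ k.cast_add_one_pos).1 hn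
  have : (k + 1) * n < 2 ^ n := by exact_mod_cast hlt
  exact lt_of_le_of_lt (Nat.mul_le_mul_right n k.le_succ) this

theorem PiNat.exists_cylinder_subset {E : ℕ → Type*} [∀ n, TopologicalSpace (E n)]
    [∀ n, DiscreteTopology (E n)] {U : Set (∀ n, E n)} (hU : IsOpen U) {x : ∀ n, E n}
    (hx : x ∈ U) : ∃ N, cylinder x N ⊆ U := by
  obtain ⟨_, ⟨y, N, rfl⟩, hxy, hsub⟩ :=
    (isTopologicalBasis_cylinders E).exists_subset_of_mem_open hx hU
  exact ⟨N, (mem_cylinder_iff_eq.1 hxy).symm ▸ hsub⟩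

theorem continuous_hRes (n : ℕ) : Continuous fun x => hRes x n :=
  continuous_pi fun _ => continuous_apply _

theorem exists_mem_cylinder_hRes_eq (x : ℕ → Bool) (n : ℕ) (f : Fin (2 ^ n) → Bool) :
    ∃ y ∈ cylinder x (2 ^ n - 1), hRes y n = f := by
  refine ⟨fun j => if h : 2 ^ n - 1 ≤ j ∧ j - (2 ^ n - 1) < 2 ^ n then f ⟨_, h.2⟩ else x j,
    fun i hi => by simp [not_le.2 hi], ?_⟩
  funext i
  simp [hRes]

theorem isClosed_slalomSet (σ : (n : ℕ) → Finset (Fin (2 ^ n) → Bool)) :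
    IsClosed (slalomSet σ) := by
  have : slalomSet σ = ⋂ n, (fun x => hRes x n) ⁻¹' (σ n : Set (Fin (2 ^ n) → Bool)) := by
    ext x
    simp [slalomSet]
  rw [this]
  exact isClosed_iInter fun n => (σ n).finite_toSet.isClosed.preimage (continuous_hRes n)

theorem interior_slalomSet_eq_empty {σ : (n : ℕ) → Finset (Fin (2 ^ n) → Bool)}
    (h : ∃ᶠ n in atTop, ∃ f, f ∉ σ n) : interior (slalomSet σ) = ∅ := by
  refine Set.eq_empty_of_forall_notMem fun x hx => ?_
  obtain ⟨N, hN⟩ := exists_cylinder_subset isOpen_interior hx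
  obtain ⟨n, hNn, f, hf⟩ := frequently_atTop.1 h N
  obtain ⟨y, hy, rfl⟩ := exists_mem_cylinder_hRes_eq x n f
  have hN_le : N ≤ 2 ^ n - 1 := by have := n.lt_two_pow_self; omega
  exact hf (interior_subset (hN (cylinder_anti x hN_le hy)) n)

/-- If `σ(n)` is a set of at most `2^{kn}` functions `I_n → 2` for each `n`, then
the slalom set `B = {x : ∀ n, h_x(n) ∈ σ(n)}` is closed and nowhere dense in `2^ω`. -/
theorem slalomSet_closed_nowhereDense (k : ℕ)
    (σ : (n : ℕ) → Finset (Fin (2 ^ n) → Bool))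
    (hσ : ∀ n : ℕ, (σ n).card ≤ 2 ^ (k * n)) :
    IsClosed (slalomSet σ) ∧ IsNowhereDense (slalomSet σ) := by
  have hclosed := isClosed_slalomSet σ
  refine ⟨hclosed, hclosed.isNowhereDense_iff.2 (interior_slalomSet_eq_empty ?_)⟩
  refine (Nat.eventually_mul_lt_two_pow k).frequently.mono fun n hn => ?_
  have hcard : (σ n).card < (Finset.univ : Finset (Fin (2 ^ n) → Bool)).card := by
    calc (σ n).card ≤ 2 ^ (k * n) := hσ n
      _ < 2 ^ 2 ^ n := Nat.pow_lt_pow_right one_lt_two hn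
      _ = _ := by simp
  obtain ⟨f, -, hf⟩ := Finset.exists_mem_notMem_of_card_lt_card hcard
  exact ⟨f, hf⟩
end

section
/- Let Θ be a topologically reasonable family of subsets of ω^ω. If every set in Θ has the Baire property, then every set in Θ is Miller measurable. -/
/-- `T` is a tree of finite sequences of natural numbers: closed under initial segments. -/
def IsTreeN (T : Set (List ℕ)) : Prop :=
  ∀ t ∈ T, ∀ k : ℕ, t.take k ∈ T

/-- The set of immediate successors of `t` in `T`. -/
def succs (T : Set (List ℕ)) (t : List ℕ) : Set ℕ :=
  { k | t ++ [k] ∈ T }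

/-- `t` is a splitting node of `T`: it lies in `T` and has at least two
immediate successors in `T`. -/
def SplitNodeN (T : Set (List ℕ)) (t : List ℕ) : Prop :=
  t ∈ T ∧ ∃ k l : ℕ, k ≠ l ∧ k ∈ succs T t ∧ l ∈ succs T t

/-- `T` is a Miller (superperfect) tree: a nonempty tree in which every node
extends to a splitting node, and every splitting node has infinitely many
immediate successors. -/
def IsMiller (T : Set (List ℕ)) : Prop :=
  IsTreeN T ∧ T.Nonempty ∧ (∀ t ∈ T, ∃ s, t <+: s ∧ SplitNodeN T s) ∧
  (∀ t : List ℕ, SplitNodeN T t → (succs T t).Infinite)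

/-- The body `[T]` of a tree: all infinite branches whose finite initial
segments all lie in `T`. -/
def bodyN (T : Set (List ℕ)) : Set (ℕ → ℕ) :=
  { x | ∀ n : ℕ, (List.ofFn fun i : Fin n => x i) ∈ T }

/-- `X ⊆ ω^ω` is Miller measurable: inside every Miller tree there is a Miller
subtree whose body is contained in `X` or disjoint from `X`. -/
def MillerMeasurable (X : Set (ℕ → ℕ)) : Prop :=
  ∀ T : Set (List ℕ), IsMiller T →
    ∃ T' : Set (List ℕ), IsMiller T' ∧ T' ⊆ T ∧ (bodyN T' ⊆ X ∨ bodyN T' ∩ X = ∅)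

/-- A family of subsets of Baire space is topologically reasonable if it is closed
under continuous preimages and under intersections with closed sets. -/
def TopReasonableN (Θ : Set (Set (ℕ → ℕ))) : Prop :=
  (∀ X ∈ Θ, ∀ f : (ℕ → ℕ) → (ℕ → ℕ), Continuous f → f ⁻¹' X ∈ Θ) ∧
  (∀ X ∈ Θ, ∀ C : Set (ℕ → ℕ), IsClosed C → X ∩ C ∈ Θ)

/-- `X` has the Baire property: it differs from an open set by a meager set. -/
def HasBairePropN (X : Set (ℕ → ℕ)) : Prop :=
  ∃ U : Set (ℕ → ℕ), IsOpen U ∧ IsMeagre (symmDiff X U)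

/-!
A Miller tree `T` carries a *Miller scheme*: a prefix-monotone assignment `c ↦ node c` of
splitting nodes of `T` to finite sequences, whose one-step extensions `c ++ [k]` pass through
distinct successors of `node c`. Following the nodes along `x ∈ ω^ω` defines a continuous map
`φ : ω^ω → [T]`, and for every Miller tree `S` the nodes of `T` below `node '' S` form a Miller
subtree of `T` whose branches all come from branches of `S`. Since `φ⁻¹ X ∈ Θ` has the Baire
property, it is meagre or comeagre in some basic open set; a comeagre set contains the body of a
Miller tree (run a scheme through a decreasing sequence of dense open sets), and pushing that
tree forward along the scheme gives the required subtree of `T`.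
-/

open Function Set

namespace List

variable {α : Type*}

lemma exists_append_singleton_prefix_of_prefix_of_ne {c d : List α} (h : c <+: d) (hne : c ≠ d) :
    ∃ k, c ++ [k] <+: d := by
  obtain ⟨_ | ⟨k, r⟩, rfl⟩ := h
  · simp at hne
  · exact ⟨k, r, by simp⟩

lemma eq_of_append_singleton_prefix {u v : List α} {k l : α} (hk : u ++ [k] <+: v)
    (hl : u ++ [l] <+: v) : k = l := by
  rcases prefix_or_prefix_of_prefix hk hl with h | h
  · simpa using (prefix_append_right_inj u).1 h
  · exact (by simpa using (prefix_append_right_inj u).1 h : l = k).symm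

lemma prefix_or_prefix_or_exists_fork (a b : List α) :
    a <+: b ∨ b <+: a ∨ ∃ c m m', m ≠ m' ∧ c ++ [m] <+: a ∧ c ++ [m'] <+: b := by
  induction a generalizing b with
  | nil => exact Or.inl nil_prefix
  | cons x a ih =>
    cases b with
    | nil => exact Or.inr (Or.inl nil_prefix)
    | cons y b =>
      by_cases hxy : x = y
      · subst hxy
        rcases ih b with h | h | ⟨c, m, m', hmm, hm, hm'⟩
        · exact Or.inl (cons_prefix_cons.2 ⟨rfl, h⟩)
        · exact Or.inr (Or.inl (cons_prefix_cons.2 ⟨rfl, h⟩))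
        · exact Or.inr (Or.inr ⟨x :: c, m, m', hmm, cons_prefix_cons.2 ⟨rfl, hm⟩,
            cons_prefix_cons.2 ⟨rfl, hm'⟩⟩)
      · exact Or.inr (Or.inr ⟨[], x, y, hxy, by simp, by simp⟩)

lemma eq_of_forks {u v a b : List α} {k l k' l' : α} (hkl : k ≠ l) (hk : u ++ [k] <+: a)
    (hl : u ++ [l] <+: b) (hkl' : k' ≠ l') (hk' : v ++ [k'] <+: a) (hl' : v ++ [l'] <+: b) :
    u = v := by
  wlog huv : u.length ≤ v.length generalizing u v k l k' l'
  · exact (this hkl' hk' hl' hkl hk hl (le_of_not_ge huv)).symm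
  have hva : v <+: a := (prefix_append v _).trans hk'
  rcases huv.lt_or_eq with hlt | heq
  · have hvb : v <+: b := (prefix_append v _).trans hl'
    have hkv := prefix_of_prefix_length_le hk hva (by simpa using hlt)
    have hlv := prefix_of_prefix_length_le hl hvb (by simpa using hlt)
    exact absurd (eq_of_append_singleton_prefix hkv hlv) hkl
  · exact (prefix_of_prefix_length_le ((prefix_append u _).trans hk) hva huv).eq_of_length heq

end List

lemma IsTreeN.mem_of_prefix {T : Set (List ℕ)} (hT : IsTreeN T) {s t : List ℕ} (ht : t ∈ T)
    (hst : s <+: t) : s ∈ T :=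
  List.prefix_iff_eq_take.1 hst ▸ hT t ht _

lemma isMiller_univ : IsMiller univ := by
  refine ⟨fun _ _ _ => trivial, univ_nonempty, fun t _ => ⟨t, List.prefix_refl t, trivial, 0, 1,
    zero_ne_one, trivial, trivial⟩, fun t _ => ?_⟩
  simpa [succs] using infinite_univ

def seg (x : ℕ → ℕ) (n : ℕ) : List ℕ := List.ofFn fun i : Fin n => x i

@[simp] lemma length_seg (x : ℕ → ℕ) (n : ℕ) : (seg x n).length = n := List.length_ofFn

lemma seg_succ (x : ℕ → ℕ) (n : ℕ) : seg x (n + 1) = seg x n ++ [x n] := List.ofFn_succ_last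

lemma getD_seg (x : ℕ → ℕ) {n i : ℕ} (h : i < n) : (seg x n).getD i 0 = x i := by
  simp [seg, h]

lemma seg_prefix_seg (x : ℕ → ℕ) {n m : ℕ} (h : n ≤ m) : seg x n <+: seg x m := by
  induction h with
  | refl => exact List.prefix_refl _
  | step _ ih => exact ih.trans (seg_succ x _ ▸ List.prefix_append _ _)

def cyl (t : List ℕ) : Set (ℕ → ℕ) := {x | seg x t.length = t}

lemma cyl_seg (x : ℕ → ℕ) (n : ℕ) : cyl (seg x n) = PiNat.cylinder x n := by
  ext y
  simp [cyl, PiNat.cylinder, seg, List.ofFn_inj, funext_iff, Fin.forall_iff]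

lemma mem_cyl_of_prefix {y : ℕ → ℕ} {t u : List ℕ} (hy : seg y t.length <+: u) (ht : t <+: u) :
    y ∈ cyl t :=
  (List.prefix_of_prefix_length_le hy ht (by simp)).eq_of_length (by simp)

lemma cyl_anti {s t : List ℕ} (h : s <+: t) : cyl t ⊆ cyl s := fun x hx =>
  mem_cyl_of_prefix (hx ▸ seg_prefix_seg x h.length_le) h

lemma isOpen_cyl (t : List ℕ) : IsOpen (cyl t) := by
  refine isOpen_iff_forall_mem_open.2 fun x hx => ⟨cyl t, subset_rfl, ?_, hx⟩
  have h := cyl_seg x t.length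
  rw [show seg x t.length = t from hx] at h
  exact h ▸ PiNat.isOpen_cylinder _ x t.length

lemma cyl_nonempty (t : List ℕ) : (cyl t).Nonempty :=
  ⟨fun i => t.getD i 0, List.ext_getElem (by simp) fun i hi _ => by simp [seg]⟩

lemma exists_cyl_seg_subset {W : Set (ℕ → ℕ)} (hW : IsOpen W) {z : ℕ → ℕ} (hz : z ∈ W) :
    ∃ n, cyl (seg z n) ⊆ W := by
  obtain ⟨_, ⟨x, n, rfl⟩, hzx, hxW⟩ :=
    (PiNat.isTopologicalBasis_cylinders _).exists_subset_of_mem_open hz hW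
  exact ⟨n, by rwa [cyl_seg, PiNat.mem_cylinder_iff_eq.1 hzx]⟩

lemma Dense.exists_prefix_cyl_subset {W : Set (ℕ → ℕ)} (hWd : Dense W) (hW : IsOpen W)
    (r : List ℕ) : ∃ t, r <+: t ∧ cyl t ⊆ W := by
  obtain ⟨z, hzr, hzW⟩ := hWd.inter_open_nonempty (cyl r) (isOpen_cyl r) (cyl_nonempty r)
  obtain ⟨n, hn⟩ := exists_cyl_seg_subset hW hzW
  refine ⟨seg z (max n r.length), ?_, (cyl_anti (seg_prefix_seg z (le_max_left _ _))).trans hn⟩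
  have h := seg_prefix_seg z (le_max_right n r.length)
  rwa [show seg z r.length = r from hzr] at h

lemma exists_forall_seg_of_forall_exists_append {P : List ℕ → Prop} (h0 : P [])
    (hstep : ∀ c, P c → ∃ k, P (c ++ [k])) : ∃ x : ℕ → ℕ, ∀ n, P (seg x n) := by
  choose! k hk using hstep
  let L : ℕ → List ℕ := fun n => Nat.rec [] (fun _ l => l ++ [k l]) n
  have hP : ∀ n, P (L n) := fun n => by
    induction n with
    | zero => exact h0
    | succ n ih => exact hk _ ih
  have hseg : ∀ n, seg (fun i => k (L i)) n = L n := fun n => by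
    induction n with
    | zero => rfl
    | succ n ih => rw [seg_succ, ih]
  exact ⟨fun i => k (L i), fun n => hseg n ▸ hP n⟩

lemma exists_antitone_isOpen_dense_of_mem_residual {X : Type*} [TopologicalSpace X]
    [BaireSpace X] {C : Set X} (hC : C ∈ residual X) :
    ∃ V : ℕ → Set X, (∀ n, IsOpen (V n)) ∧ (∀ n, Dense (V n)) ∧ Antitone V ∧ ⋂ n, V n ⊆ C := by
  obtain ⟨G, hGC, hG, hGd⟩ := mem_residual.1 hC
  obtain ⟨U, hU, rfl⟩ := isGδ_iff_eq_iInter_nat.1 hG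
  refine ⟨fun n => ⋂ i ∈ Iic n, U i, fun n => (finite_Iic n).isOpen_biInter fun i _ => hU i,
    fun n => dense_biInter_of_isOpen (fun i _ => hU i) (to_countable _)
      fun i _ => hGd.mono (iInter_subset U i),
    fun m n hmn => biInter_subset_biInter_left (Iic_subset_Iic.2 hmn), ?_⟩
  exact (iInter_mono fun n => biInter_subset_of_mem self_mem_Iic).trans hGC

/-- A copy of the full tree `ω^{<ω}` inside a tree of sequences. -/
structure MillerScheme where
  node : List ℕ → List ℕ
  label : List ℕ → ℕ → ℕ
  label_injective : ∀ c, Injective (label c)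
  append_label_prefix : ∀ c k, node c ++ [label c k] <+: node (c ++ [k])

namespace MillerScheme

variable (σ : MillerScheme)

lemma node_prefix_node {c d : List ℕ} (h : c <+: d) : σ.node c <+: σ.node d := by
  obtain ⟨r, rfl⟩ := h
  induction r using List.reverseRecOn with
  | nil => simp
  | append_singleton r k ih =>
    rw [← List.append_assoc]
    exact ih.trans ((List.prefix_append _ _).trans (σ.append_label_prefix _ k))

lemma append_label_prefix_node {c d : List ℕ} {k : ℕ} (h : c ++ [k] <+: d) :
    σ.node c ++ [σ.label c k] <+: σ.node d :=
  (σ.append_label_prefix c k).trans (σ.node_prefix_node h)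

lemma length_node_lt {c d : List ℕ} (h : c <+: d) (hne : c ≠ d) :
    (σ.node c).length < (σ.node d).length := by
  obtain ⟨k, hk⟩ := List.exists_append_singleton_prefix_of_prefix_of_ne h hne
  simpa using (σ.append_label_prefix_node hk).length_le

lemma length_le_length_node (c : List ℕ) : c.length ≤ (σ.node c).length := by
  induction c using List.reverseRecOn with
  | nil => simp
  | append_singleton c k ih =>
    have := σ.length_node_lt (List.prefix_append c [k]) (by simp)
    simp only [List.length_append, List.length_singleton]
    omega

lemma node_prefix_node_iff {c d : List ℕ} : σ.node c <+: σ.node d ↔ c <+: d := by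
  refine ⟨fun h => ?_, σ.node_prefix_node⟩
  rcases List.prefix_or_prefix_or_exists_fork c d with hcd | hdc | ⟨e, m, m', hmm, hm, hm'⟩
  · exact hcd
  · by_cases hne : d = c
    · exact hne ▸ List.prefix_refl d
    · exact absurd h.length_le (σ.length_node_lt hdc hne).not_ge
  · exact absurd (σ.label_injective e (List.eq_of_append_singleton_prefix
      ((σ.append_label_prefix_node hm).trans h) (σ.append_label_prefix_node hm'))) hmm

def subtree (S : Set (List ℕ)) : Set (List ℕ) := {t | ∃ c ∈ S, t <+: σ.node c}

variable {σ} {S : Set (List ℕ)}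

lemma isTreeN_subtree : IsTreeN (σ.subtree S) := by
  rintro t ⟨c, hc, ht⟩ k
  exact ⟨c, hc, (List.take_prefix k t).trans ht⟩

lemma subtree_subset {T : Set (List ℕ)} (hT : IsTreeN T) (hσT : ∀ c, σ.node c ∈ T) :
    σ.subtree S ⊆ T := by
  rintro t ⟨c, -, ht⟩
  exact hT.mem_of_prefix (hσT c) ht

lemma mapsTo_label_succs (c : List ℕ) :
    MapsTo (σ.label c) (succs S c) (succs (σ.subtree S) (σ.node c)) :=
  fun k hk => ⟨c ++ [k], hk, σ.append_label_prefix c k⟩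

lemma splitNodeN_node_subtree {c : List ℕ} (hc : SplitNodeN S c) :
    SplitNodeN (σ.subtree S) (σ.node c) := by
  obtain ⟨hcS, k, l, hkl, hk, hl⟩ := hc
  exact ⟨⟨c, hcS, List.prefix_refl _⟩, σ.label c k, σ.label c l, (σ.label_injective c).ne hkl,
    mapsTo_label_succs c hk, mapsTo_label_succs c hl⟩

/-- A splitting node `u` of the subtree is the fork of some `node a` and `node b`, and these fork
exactly at `node c`, where `a` and `b` fork. -/
lemma exists_splitNodeN_of_splitNodeN_subtree (hS : IsTreeN S) {u : List ℕ}
    (hu : SplitNodeN (σ.subtree S) u) : ∃ c, SplitNodeN S c ∧ u = σ.node c := by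
  obtain ⟨-, k, l, hkl, ⟨a, ha, hka⟩, ⟨b, hb, hlb⟩⟩ := hu
  rcases List.prefix_or_prefix_or_exists_fork a b with hab | hba | ⟨c, m, m', hmm, hm, hm'⟩
  · exact absurd (List.eq_of_append_singleton_prefix (hka.trans (σ.node_prefix_node hab)) hlb) hkl
  · exact absurd (List.eq_of_append_singleton_prefix hka (hlb.trans (σ.node_prefix_node hba))) hkl
  · refine ⟨c, ⟨hS.mem_of_prefix ha ((List.prefix_append c [m]).trans hm), m, m', hmm,
      hS.mem_of_prefix ha hm, hS.mem_of_prefix hb hm'⟩, ?_⟩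
    exact List.eq_of_forks hkl hka hlb ((σ.label_injective c).ne hmm)
      (σ.append_label_prefix_node hm) (σ.append_label_prefix_node hm')

lemma isMiller_subtree (hS : IsMiller S) : IsMiller (σ.subtree S) := by
  obtain ⟨hStree, ⟨c₀, hc₀⟩, hSsplit, hSinf⟩ := hS
  refine ⟨isTreeN_subtree, ⟨[], c₀, hc₀, List.nil_prefix⟩, ?_, fun u hu => ?_⟩
  · rintro t ⟨c, hc, ht⟩
    obtain ⟨d, hcd, hd⟩ := hSsplit c hc
    exact ⟨σ.node d, ht.trans (σ.node_prefix_node hcd), splitNodeN_node_subtree hd⟩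
  · obtain ⟨c, hc, rfl⟩ := exists_splitNodeN_of_splitNodeN_subtree hStree hu
    exact ((hSinf c hc).image (σ.label_injective c).injOn).mono
      (mapsTo_label_succs c).image_subset

lemma mem_cyl_node_nil {y : ℕ → ℕ} (hy : y ∈ bodyN (σ.subtree S)) : y ∈ cyl (σ.node []) := by
  obtain ⟨s, -, hys⟩ := hy (σ.node []).length
  exact mem_cyl_of_prefix hys (σ.node_prefix_node List.nil_prefix)

/-- A branch `y` of the subtree that follows `node c` continues along `node (c ++ [k])` for the
unique `k` with `label c k = y (node c).length`. -/
lemma exists_append_mem_cyl_node (hS : IsTreeN S) {y : ℕ → ℕ} (hy : y ∈ bodyN (σ.subtree S))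
    {c : List ℕ} (hyc : y ∈ cyl (σ.node c)) :
    ∃ k, c ++ [k] ∈ S ∧ y ∈ cyl (σ.node (c ++ [k])) := by
  set i := (σ.node c).length
  have hnext : ∀ N > i, ∃ s ∈ S, ∃ k, c ++ [k] <+: s ∧ σ.label c k = y i ∧
      seg y N <+: σ.node s := by
    intro N hN
    obtain ⟨s, hs, hys⟩ := hy N
    have hcs : c <+: s := σ.node_prefix_node_iff.1
      ((show seg y i = σ.node c from hyc) ▸ (seg_prefix_seg y hN.le).trans hys)
    have hne : c ≠ s := by
      rintro rfl
      exact absurd (by simpa using hys.length_le) hN.not_ge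
    obtain ⟨k, hk⟩ := List.exists_append_singleton_prefix_of_prefix_of_ne hcs hne
    refine ⟨s, hs, k, hk,
      List.eq_of_append_singleton_prefix (σ.append_label_prefix_node hk) ?_, hys⟩
    rw [← show seg y i = σ.node c from hyc, ← seg_succ]
    exact (seg_prefix_seg y hN).trans hys
  obtain ⟨-, -, k, -, hk, -⟩ := hnext (i + 1) (lt_add_one i)
  obtain ⟨s, hs, k', hk's, hk', hys⟩ :=
    hnext _ (σ.length_node_lt (List.prefix_append c [k]) (by simp))
  obtain rfl : k = k' := σ.label_injective c (hk.trans hk'.symm)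
  exact ⟨k, hS.mem_of_prefix hs hk's, mem_cyl_of_prefix hys (σ.node_prefix_node hk's)⟩

lemma exists_mem_bodyN_forall_mem_cyl_node (hS : IsTreeN S) {y : ℕ → ℕ}
    (hy : y ∈ bodyN (σ.subtree S)) : ∃ x ∈ bodyN S, ∀ n, y ∈ cyl (σ.node (seg x n)) := by
  obtain ⟨s, hs, -⟩ := hy 0
  obtain ⟨x, hx⟩ := exists_forall_seg_of_forall_exists_append
    (P := fun c => c ∈ S ∧ y ∈ cyl (σ.node c))
    ⟨hS.mem_of_prefix hs List.nil_prefix, mem_cyl_node_nil hy⟩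
    fun c ⟨_, hyc⟩ => exists_append_mem_cyl_node hS hy hyc
  exact ⟨x, fun n => (hx n).1, fun n => (hx n).2⟩

variable (σ)

/-- The branch of the scheme along `x`: its `i`-th entry is read off `node (seg x (i + 1))`,
which is longer than `i`. -/
def limit (x : ℕ → ℕ) : ℕ → ℕ := fun i => (σ.node (seg x (i + 1))).getD i 0

lemma continuous_limit : Continuous σ.limit := by
  refine continuous_pi fun i => ?_
  have h : (fun x => σ.limit x i) = (fun v : Fin (i + 1) → ℕ => (σ.node (List.ofFn v)).getD i 0) ∘
      fun x j => x j := rfl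
  rw [h]
  exact continuous_of_discreteTopology.comp (continuous_pi fun j => continuous_apply _)

lemma limit_eq {x y : ℕ → ℕ} (h : ∀ n, y ∈ cyl (σ.node (seg x n))) : σ.limit x = y := by
  funext i
  have hi : i < (σ.node (seg x (i + 1))).length := by
    simpa using σ.length_le_length_node (seg x (i + 1))
  rw [limit, ← show seg y _ = σ.node (seg x (i + 1)) from h (i + 1), getD_seg y hi]

lemma bodyN_subtree_subset_image (hS : IsTreeN S) : bodyN (σ.subtree S) ⊆ σ.limit '' bodyN S :=
  fun _ hy =>
    let ⟨x, hx, hxy⟩ := exists_mem_bodyN_forall_mem_cyl_node hS hy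
    ⟨x, hx, σ.limit_eq hxy⟩

end MillerScheme

namespace MillerScheme

section ofExtend

variable (base : List ℕ) (e : List ℕ → ℕ → ℕ) (he : ∀ u, Injective (e u))
  (F : List ℕ → ℕ → List ℕ) (hF : ∀ u k, u ++ [e u k] <+: F u k)

def ofExtend : MillerScheme where
  node c := c.foldl F base
  label c := e (c.foldl F base)
  label_injective _ := he _
  append_label_prefix c k := by simpa using hF (c.foldl F base) k

@[simp] lemma ofExtend_node_nil : (ofExtend base e he F hF).node [] = base := rfl

@[simp] lemma ofExtend_node_append (c : List ℕ) (k : ℕ) :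
    (ofExtend base e he F hF).node (c ++ [k]) = F ((ofExtend base e he F hF).node c) k := by
  simp [ofExtend]

end ofExtend

section ofTree

variable (T : Set (List ℕ))

open Classical in
/-- A splitting node of `T` extending `t`, or `t` itself if there is none. -/
noncomputable def splitAbove (t : List ℕ) : List ℕ :=
  if h : ∃ s, t <+: s ∧ SplitNodeN T s then h.choose else t

lemma prefix_splitAbove (t : List ℕ) : t <+: splitAbove T t := by
  unfold splitAbove
  split_ifs with h
  exacts [h.choose_spec.1, List.prefix_refl t]

lemma splitNodeN_splitAbove {T : Set (List ℕ)} (hT : IsMiller T) {t : List ℕ} (ht : t ∈ T) :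
    SplitNodeN T (splitAbove T t) := by
  have h := hT.2.2.1 t ht
  simpa [splitAbove, h] using h.choose_spec.2

open Classical in
/-- An enumeration of the successors of `u` in `T`, or `id` if there are only finitely many. -/
noncomputable def succEnum (u : List ℕ) : ℕ → ℕ :=
  if h : (succs T u).Infinite then fun k => h.natEmbedding _ k else id

lemma succEnum_injective (u : List ℕ) : Injective (succEnum T u) := by
  unfold succEnum
  split_ifs with h
  exacts [Subtype.val_injective.comp (h.natEmbedding _).injective, injective_id]

lemma succEnum_mem {u : List ℕ} (h : (succs T u).Infinite) (k : ℕ) :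
    succEnum T u k ∈ succs T u := by
  simp only [succEnum, h, dite_true]
  exact (h.natEmbedding _ k).2

noncomputable def ofTree : MillerScheme :=
  ofExtend (splitAbove T []) (succEnum T) (succEnum_injective T)
    (fun u k => splitAbove T (u ++ [succEnum T u k])) fun _ _ => prefix_splitAbove _ _

variable {T}

lemma splitNodeN_ofTree_node (hT : IsMiller T) (c : List ℕ) : SplitNodeN T ((ofTree T).node c) := by
  induction c using List.reverseRecOn with
  | nil =>
    obtain ⟨t, ht⟩ := hT.2.1
    exact splitNodeN_splitAbove hT (by simpa using hT.1 t ht 0)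
  | append_singleton c k ih =>
    simp only [ofTree, ofExtend_node_append]
    exact splitNodeN_splitAbove hT (succEnum_mem T (hT.2.2.2 _ ih) k)

end ofTree

end MillerScheme

lemma exists_isMiller_bodyN_subset_of_isMeagre {M : Set (ℕ → ℕ)} (hM : IsMeagre M)
    (s : List ℕ) : ∃ S, IsMiller S ∧ bodyN S ⊆ cyl s \ M := by
  obtain ⟨V, hVo, hVd, hVanti, hVM⟩ := exists_antitone_isOpen_dense_of_mem_residual hM
  choose F hrF hFV using fun n => (hVd n).exists_prefix_cyl_subset (hVo n)
  let σ := MillerScheme.ofExtend (F 0 s) (fun _ => id) (fun _ => injective_id)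
    (fun u k => F (u.length + 1) (u ++ [k])) fun _ _ => hrF _ _
  have hσV : ∀ c, cyl (σ.node c) ⊆ V c.length := by
    intro c
    induction c using List.reverseRecOn with
    | nil => exact hFV 0 s
    | append_singleton c k ih =>
      simp only [σ, MillerScheme.ofExtend_node_append]
      refine (hFV _ _).trans (hVanti ?_)
      simpa using σ.length_le_length_node c
  refine ⟨σ.subtree univ, σ.isMiller_subtree isMiller_univ, fun y hy => ?_⟩
  obtain ⟨x, -, hx⟩ := σ.exists_mem_bodyN_forall_mem_cyl_node (S := univ) (fun _ _ _ => trivial) hy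
  exact ⟨cyl_anti (hrF 0 s) (hx 0), fun hyM =>
    hVM (mem_iInter.2 fun n => by simpa using hσV (seg x n) (hx n)) hyM⟩

lemma exists_isMiller_bodyN_subset_or_disjoint {Y : Set (ℕ → ℕ)} (hY : HasBairePropN Y) :
    ∃ S, IsMiller S ∧ (bodyN S ⊆ Y ∨ bodyN S ∩ Y = ∅) := by
  obtain ⟨U, hUo, hUm⟩ := hY
  rcases U.eq_empty_or_nonempty with rfl | ⟨z, hz⟩
  · rw [← bot_eq_empty, symmDiff_bot] at hUm
    obtain ⟨S, hS, hSY⟩ := exists_isMiller_bodyN_subset_of_isMeagre hUm []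
    exact ⟨S, hS, Or.inr (subset_empty_iff.1 fun y hy => (hSY hy.1).2 hy.2)⟩
  · obtain ⟨n, hn⟩ := exists_cyl_seg_subset hUo hz
    have hM : IsMeagre (cyl (seg z n) \ Y) :=
      hUm.mono fun w hw => Or.inr ⟨hn hw.1, hw.2⟩
    obtain ⟨S, hS, hSY⟩ := exists_isMiller_bodyN_subset_of_isMeagre hM (seg z n)
    exact ⟨S, hS, Or.inl fun y hy => of_not_not fun hyY => (hSY hy).2 ⟨(hSY hy).1, hyY⟩⟩

/-- If every set in a topologically reasonable family `Θ` of subsets of Baire space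
has the Baire property, then every set in `Θ` is Miller measurable. -/
theorem baireProp_implies_millerMeasurable (Θ : Set (Set (ℕ → ℕ)))
    (hΘ : TopReasonableN Θ) (hBP : ∀ X ∈ Θ, HasBairePropN X) :
    ∀ X ∈ Θ, MillerMeasurable X := by
  intro X hX T hT
  let σ := MillerScheme.ofTree T
  obtain ⟨S, hS, hSX⟩ :=
    exists_isMiller_bodyN_subset_or_disjoint (hBP _ (hΘ.1 X hX σ.limit σ.continuous_limit))
  refine ⟨σ.subtree S, MillerScheme.isMiller_subtree hS,
    MillerScheme.subtree_subset hT.1 fun c => (MillerScheme.splitNodeN_ofTree_node hT c).1, ?_⟩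
  have himage := σ.bodyN_subtree_subset_image hS.1
  rcases hSX with hSX | hSX
  · exact Or.inl (himage.trans (image_subset_iff.2 hSX))
  · refine Or.inr (subset_empty_iff.1 ?_)
    calc bodyN (σ.subtree S) ∩ X ⊆ σ.limit '' bodyN S ∩ X := inter_subset_inter_left X himage
      _ = ∅ := by rw [← image_inter_preimage, hSX, image_empty]
end
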